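/- Let G be an orientable ribbon graph such that G = P ⊕ Q, a 1-sum occurring at a vertex v, where Q is a plane ribbon graph. Then the genus of the partial dual G^{E(Q)} is equal to the genus of P; moreover, every vertex of P other than v is also a vertex of G^{E(Q)}. -/

import Mathlib

/-!
Write `v, e, f, c` for the numbers of vertices, edges, faces and components. The counting rests
on one fact about two involutions `a, b`: if `a'` is the first-return map of the alternating
walk `x, a x, b a x, …` to a `b`-invariant set of flags, then the `⟨a', b⟩`-orbits there are
exactly the traces of the `⟨a, b⟩`-orbits meeting it. For `H = G|_A` this identifies the
vertices of `H` with the vertices of `G` meeting `A` and, taking `b = t0` on `A`, the faces of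
`H` with the vertices of `G^A` meeting `A`; the vertices of `G^A` missing `A` are those of `G`.
Hence `v(G^A) + v(H) = f(H) + v(G)`.

For the 1-sum, `v(G) + 1 = v(P) + v(Q)`, `e(G) = e(P) + e(Q)` and `c(G) + 1 = c(P) + c(Q)`, the
vertex `v` and its component being counted twice. Faces of `G^{E(Q)}` are vertices of
`G^{E(P)}`, and partial duality preserves `e` and `c`. Substituting gives
`ε(G^{E(Q)}) = ε(P) + ε(Q) = ε(P)`. A vertex of `P` other than `v` carries no flag of `Q`, so
dualising `E(Q)` leaves it untouched.
-/

/-- An orientable ribbon graph, encoded combinatorially as a finite set `F` of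
flags together with three fixed-point-free involutions `t0`, `t1`, `t2` such
that `t0` and `t2` commute, `t0 ∘ t2` is fixed-point-free, and which is
orientable. -/
structure RibbonGraph : Type 1 where
  F : Type
  fintype : Fintype F
  t0 : F → F
  t1 : F → F
  t2 : F → F
  t0_invol : Function.Involutive t0
  t1_invol : Function.Involutive t1
  t2_invol : Function.Involutive t2
  t0_ne : ∀ x, t0 x ≠ x
  t1_ne : ∀ x, t1 x ≠ x
  t2_ne : ∀ x, t2 x ≠ x
  comm : ∀ x, t0 (t2 x) = t2 (t0 x)
  t02_ne : ∀ x, t0 (t2 x) ≠ x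
  orientable : ∃ s : F → Bool,
    (∀ x, s (t0 x) = !s x) ∧ (∀ x, s (t1 x) = !s x) ∧ (∀ x, s (t2 x) = !s x)

namespace RibbonGraph

/-- The edge containing a flag `x`: the orbit of `x` under `⟨t0, t2⟩`. -/
def edgeOf (G : RibbonGraph) (x : G.F) : Set G.F :=
  {x, G.t0 x, G.t2 x, G.t0 (G.t2 x)}

/-- The set `E(G)` of edges of `G`. -/
def edgeSet (G : RibbonGraph) : Set (Set G.F) := {e | ∃ x, e = G.edgeOf x}

lemma edgeOf_t0 (G : RibbonGraph) (x : G.F) : G.edgeOf (G.t0 x) = G.edgeOf x := by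
  have e1 : G.t0 (G.t0 x) = x := G.t0_invol x
  have e2 : G.t2 (G.t0 x) = G.t0 (G.t2 x) := (G.comm x).symm
  unfold edgeOf
  rw [e1, e2, G.t0_invol (G.t2 x)]
  ext y
  simp only [Set.mem_insert_iff, Set.mem_singleton_iff]
  tauto

lemma edgeOf_t2 (G : RibbonGraph) (x : G.F) : G.edgeOf (G.t2 x) = G.edgeOf x := by
  have e1 : G.t2 (G.t2 x) = x := G.t2_invol x
  unfold edgeOf
  rw [e1]
  ext y
  simp only [Set.mem_insert_iff, Set.mem_singleton_iff]
  tauto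

/-- Two flags lie on the same vertex: the equivalence generated by `t1, t2`. -/
def vertexRel (G : RibbonGraph) : G.F → G.F → Prop :=
  Relation.EqvGen fun x y => y = G.t1 x ∨ y = G.t2 x

/-- Two flags lie in the same connected component. -/
def compRel (G : RibbonGraph) : G.F → G.F → Prop :=
  Relation.EqvGen fun x y => y = G.t0 x ∨ y = G.t1 x ∨ y = G.t2 x

/-- The number of vertices: the number of orbits of `⟨t1, t2⟩`. -/
noncomputable def numVertices (G : RibbonGraph) : ℕ :=
  Nat.card (Quot (fun x y : G.F => y = G.t1 x ∨ y = G.t2 x))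

/-- The number of edges: the number of orbits of `⟨t0, t2⟩`. -/
noncomputable def numEdges (G : RibbonGraph) : ℕ :=
  Nat.card (Quot (fun x y : G.F => y = G.t0 x ∨ y = G.t2 x))

/-- The number of faces: the number of orbits of `⟨t0, t1⟩`. -/
noncomputable def numFaces (G : RibbonGraph) : ℕ :=
  Nat.card (Quot (fun x y : G.F => y = G.t0 x ∨ y = G.t1 x))

/-- The number of connected components: the number of orbits of `⟨t0, t1, t2⟩`. -/
noncomputable def numComponents (G : RibbonGraph) : ℕ :=
  Nat.card (Quot (fun x y : G.F => y = G.t0 x ∨ y = G.t1 x ∨ y = G.t2 x))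

/-- The Euler genus `ε(G) = 2c - v + e - f`. -/
noncomputable def eulerGenus (G : RibbonGraph) : ℤ :=
  2 * (G.numComponents : ℤ) - (G.numVertices : ℤ) + (G.numEdges : ℤ) - (G.numFaces : ℤ)

/-- A ribbon graph is plane if its Euler genus is zero. -/
def IsPlane (G : RibbonGraph) : Prop := G.eulerGenus = 0

/-- The genus `g(G)`, defined by `ε(G) = 2 g(G)` (for orientable `G`). -/
noncomputable def genus (G : RibbonGraph) : ℤ := G.eulerGenus / 2

/-- `G` is connected if all flags lie in one component. -/
def Connected (G : RibbonGraph) : Prop := ∀ x y : G.F, G.compRel x y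

/-- The vertex containing the flag `x`. -/
def vertexOf (G : RibbonGraph) (x : G.F) : Set G.F := {y | G.vertexRel x y}

/-- The set `V(G)` of vertices of `G`. -/
def vertices (G : RibbonGraph) : Set (Set G.F) := {v | ∃ x, v = G.vertexOf x}

/-- The vertices incident to at least one edge of `B`. -/
def verticesIn (G : RibbonGraph) (B : Set (Set G.F)) : Set (Set G.F) :=
  {v | v ∈ G.vertices ∧ ∃ x ∈ v, G.edgeOf x ∈ B}

/-- An edge `e` is incident to a vertex `w`. -/
def Incid (G : RibbonGraph) (e w : Set G.F) : Prop := ∃ x ∈ e, x ∈ w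

open Classical in
/-- The partial dual `G^A` of `G` with respect to a set `A` of edges: the roles
of `t0` and `t2` are swapped on all flags of edges in `A`. -/
noncomputable def pdual (G : RibbonGraph) (A : Set (Set G.F)) : RibbonGraph where
  F := G.F
  fintype := G.fintype
  t0 := fun x => if G.edgeOf x ∈ A then G.t2 x else G.t0 x
  t1 := G.t1
  t2 := fun x => if G.edgeOf x ∈ A then G.t0 x else G.t2 x
  t0_invol := by
    intro x
    by_cases h : G.edgeOf x ∈ A
    · have h' : G.edgeOf (G.t2 x) ∈ A := by rwa [G.edgeOf_t2]
      simp only [if_pos h, if_pos h']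
      exact G.t2_invol x
    · have h' : G.edgeOf (G.t0 x) ∉ A := by rwa [G.edgeOf_t0]
      simp only [if_neg h, if_neg h']
      exact G.t0_invol x
  t1_invol := G.t1_invol
  t2_invol := by
    intro x
    by_cases h : G.edgeOf x ∈ A
    · have h' : G.edgeOf (G.t0 x) ∈ A := by rwa [G.edgeOf_t0]
      simp only [if_pos h, if_pos h']
      exact G.t0_invol x
    · have h' : G.edgeOf (G.t2 x) ∉ A := by rwa [G.edgeOf_t2]
      simp only [if_neg h, if_neg h']
      exact G.t2_invol x
  t0_ne := by
    intro x
    by_cases h : G.edgeOf x ∈ A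
    · simp only [if_pos h]; exact G.t2_ne x
    · simp only [if_neg h]; exact G.t0_ne x
  t1_ne := G.t1_ne
  t2_ne := by
    intro x
    by_cases h : G.edgeOf x ∈ A
    · simp only [if_pos h]; exact G.t0_ne x
    · simp only [if_neg h]; exact G.t2_ne x
  comm := by
    intro x
    by_cases h : G.edgeOf x ∈ A
    · have h0 : G.edgeOf (G.t0 x) ∈ A := by rwa [G.edgeOf_t0]
      have h2 : G.edgeOf (G.t2 x) ∈ A := by rwa [G.edgeOf_t2]
      simp only [if_pos h, if_pos h0, if_pos h2]
      exact (G.comm x).symm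
    · have h0 : G.edgeOf (G.t0 x) ∉ A := by rwa [G.edgeOf_t0]
      have h2 : G.edgeOf (G.t2 x) ∉ A := by rwa [G.edgeOf_t2]
      simp only [if_neg h, if_neg h0, if_neg h2]
      exact G.comm x
  t02_ne := by
    intro x
    by_cases h : G.edgeOf x ∈ A
    · have h0 : G.edgeOf (G.t0 x) ∈ A := by rwa [G.edgeOf_t0]
      simp only [if_pos h, if_pos h0]
      rw [← G.comm x]
      exact G.t02_ne x
    · have h2 : G.edgeOf (G.t2 x) ∉ A := by rwa [G.edgeOf_t2]
      simp only [if_neg h, if_neg h2]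
      exact G.t02_ne x
  orientable := by
    obtain ⟨s, hs0, hs1, hs2⟩ := G.orientable
    refine ⟨s, ?_, hs1, ?_⟩
    · intro x
      by_cases h : G.edgeOf x ∈ A
      · simp only [if_pos h]; exact hs2 x
      · simp only [if_neg h]; exact hs0 x
    · intro x
      by_cases h : G.edgeOf x ∈ A
      · simp only [if_pos h]; exact hs0 x
      · simp only [if_neg h]; exact hs2 x

/-- The geometric dual `G* = G^{E(G)}`. -/
noncomputable def gdual (G : RibbonGraph) : RibbonGraph := G.pdual G.edgeSet

/-- Equality (equivalence) of ribbon graphs: a bijection of flag sets commuting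
with the three involutions. -/
def Equiv (G H : RibbonGraph) : Prop :=
  ∃ ψ : G.F ≃ H.F, (∀ x, ψ (G.t0 x) = H.t0 (ψ x)) ∧
    (∀ x, ψ (G.t1 x) = H.t1 (ψ x)) ∧ (∀ x, ψ (G.t2 x) = H.t2 (ψ x))

/-- `H` is the ribbon subgraph of `G` induced by the edge set `A`, realized by
the flag embedding `φ`. The embedding identifies the flags of `H` with the
flags of edges in `A`, commutes with `t0` and `t2`, and `t1` of `H` is the
pairing of flags obtained from `t1` of `G` by skipping over flags of the
deleted edges (joining up the cyclic order around each vertex). -/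
def IsInducedVia (G H : RibbonGraph) (A : Set (Set G.F)) (φ : H.F → G.F) : Prop :=
  A ⊆ G.edgeSet ∧ Function.Injective φ ∧
  Set.range φ = {x : G.F | G.edgeOf x ∈ A} ∧
  (∀ x, φ (H.t0 x) = G.t0 (φ x)) ∧ (∀ x, φ (H.t2 x) = G.t2 (φ x)) ∧
  (∀ x, ∃ k : ℕ,
    φ (H.t1 x) = G.t1 ((G.t2 ∘ G.t1)^[k] (φ x)) ∧
    ∀ j < k, G.edgeOf (G.t1 ((G.t2 ∘ G.t1)^[j] (φ x))) ∉ A)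

/-- `H` is the ribbon subgraph of `G` induced by the edge set `A` (that is,
`H = G|_A`, consisting of the edges in `A` and the vertices incident to them). -/
def IsInducedSubgraph (G H : RibbonGraph) (A : Set (Set G.F)) : Prop :=
  ∃ φ : H.F → G.F, IsInducedVia G H A φ

/-- The ribbon subgraph `G|_A` induced by the edge set `A` is plane. -/
def PlanePart (G : RibbonGraph) (A : Set (Set G.F)) : Prop :=
  ∃ H : RibbonGraph, IsInducedSubgraph G H A ∧ H.IsPlane

/-- Connectivity of two flags within the ribbon subgraph induced by `B`. -/
def subRel (G : RibbonGraph) (B : Set (Set G.F)) : G.F → G.F → Prop :=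
  Relation.EqvGen fun x y =>
    G.edgeOf x ∈ B ∧ G.edgeOf y ∈ B ∧ (y = G.t0 x ∨ G.vertexRel x y)

/-- The set of edges of the connected component of the ribbon subgraph induced
by `B` that contains the flag `x`. -/
def componentOf (G : RibbonGraph) (B : Set (Set G.F)) (x : G.F) : Set (Set G.F) :=
  {e | e ∈ B ∧ ∃ y ∈ e, G.subRel B x y}

/-- `C` is (the edge set of) a connected component of the ribbon subgraph
induced by `B`. -/
def IsComponentOf (G : RibbonGraph) (C B : Set (Set G.F)) : Prop :=
  ∃ x : G.F, G.edgeOf x ∈ B ∧ C = G.componentOf B x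

/-- The ribbon subgraph induced by `B ∪ C` is the 1-sum of the (non-trivial)
ribbon subgraphs induced by `B` and by `C`, occurring at the vertex `v`: the
edge sets are disjoint and `v` is the only common vertex. -/
def IsOneSumAt (G : RibbonGraph) (B C : Set (Set G.F)) (v : Set G.F) : Prop :=
  B ⊆ G.edgeSet ∧ C ⊆ G.edgeSet ∧ B.Nonempty ∧ C.Nonempty ∧ Disjoint B C ∧
  v ∈ G.vertices ∧ G.verticesIn B ∩ G.verticesIn C = {v}

/-- The ribbon subgraph induced by `B ∪ C` is the join of the ribbon subgraphs
induced by `B` and by `C` at the vertex `v`: it is a 1-sum at `v` and the flags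
of edges of `B` at `v` form an interval in the cyclic order around `v`
(equivalently, there are at most two `t1`-corners at `v` between an edge of `B`
and an edge of `C`). -/
def IsJoinAt (G : RibbonGraph) (B C : Set (Set G.F)) (v : Set G.F) : Prop :=
  G.IsOneSumAt B C v ∧
  Nat.card {x : G.F // x ∈ v ∧ G.edgeOf x ∈ B ∧ G.edgeOf (G.t1 x) ∈ C} ≤ 2

/-- `G` is the join `P ∨ Q` of the ribbon graphs `P` and `Q`. -/
def IsJoinDecomp (G P Q : RibbonGraph) : Prop :=
  ∃ (Bp Bq : Set (Set G.F)) (v : Set G.F),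
    IsInducedSubgraph G P Bp ∧ IsInducedSubgraph G Q Bq ∧
    G.IsJoinAt Bp Bq v ∧ Bp ∪ Bq = G.edgeSet

/-- `G` is prime: it cannot be expressed as a join of two ribbon graphs. -/
def Prime (G : RibbonGraph) : Prop :=
  ¬ ∃ (B C : Set (Set G.F)) (v : Set G.F), B ∪ C = G.edgeSet ∧ G.IsJoinAt B C v

/-- The ribbon subgraph `G|_A` induced by the edge set `A` is prime. -/
def PrimePart (G : RibbonGraph) (A : Set (Set G.F)) : Prop :=
  ∃ H : RibbonGraph, IsInducedSubgraph G H A ∧ H.Prime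

/-- `A` defines a plane-biseparation of the ribbon subgraph of `G` induced by
the edge set `W` (where `A ⊆ W`): either trivially (`A = W` or `A = ∅`, both
parts plane); or both parts `P_A = G|_A` and `Q_A = G|_{W ∖ A}` are plane and
the subgraph induced by `W` can be written as a sequence of 1-sums of the
connected components of `P_A` and `Q_A` such that every 1-sum occurs at a
distinct vertex and involves exactly one component of `P_A` and one of `Q_A`. -/
def DefinesPlaneBisepOn (G : RibbonGraph) (W A : Set (Set G.F)) : Prop :=
  ((A = W ∨ A = ∅) ∧ G.PlanePart A ∧ G.PlanePart (W \ A)) ∨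
  (G.PlanePart A ∧ G.PlanePart (W \ A) ∧
    ∃ (l : ℕ) (H : Fin l → Set (Set G.F)) (vtx : Fin l → Set G.F),
      1 ≤ l ∧ (⋃ i, H i) = W ∧
      (∀ i, G.IsComponentOf (H i) A ∨ G.IsComponentOf (H i) (W \ A)) ∧
      (∀ i : Fin l, 0 < i.val →
        G.IsOneSumAt (⋃ j : Fin l, ⋃ (_ : j < i), H j) (H i) (vtx i)) ∧
      (∀ i j : Fin l, 0 < i.val → 0 < j.val → vtx i = vtx j → i = j) ∧
      (∀ i : Fin l, 0 < i.val → ∃! j : Fin l, j < i ∧ vtx i ∈ G.verticesIn (H j)) ∧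
      (∀ i j : Fin l, 0 < i.val → j < i → vtx i ∈ G.verticesIn (H j) →
        (G.IsComponentOf (H i) A ↔ G.IsComponentOf (H j) (W \ A))))

/-- `A` defines a plane-biseparation of `G`: the restriction of `A` to each
connected component of `G` defines a plane-biseparation of that component. -/
def DefinesPlaneBisep (G : RibbonGraph) (A : Set (Set G.F)) : Prop :=
  ∀ C, G.IsComponentOf C G.edgeSet → G.DefinesPlaneBisepOn C (A ∩ C)

/-- `G` is written as a (left-associated) sequence of joins
`G = H 0 ∨ H 1 ∨ ⋯ ∨ H (l-1)` of the ribbon subgraphs induced by the `H i`. -/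
def IsSeqOfJoins (G : RibbonGraph) (l : ℕ) (H : Fin l → Set (Set G.F)) : Prop :=
  1 ≤ l ∧ (∀ i, H i ⊆ G.edgeSet) ∧ (⋃ i, H i) = G.edgeSet ∧
  ∀ i : Fin l, 0 < i.val →
    ∃ v : Set G.F, G.IsJoinAt (⋃ j : Fin l, ⋃ (_ : j < i), H j) (H i) v

/-- `A` defines a plane-join-biseparation of `G`: `G = H1 ∨ ⋯ ∨ Hl` with each
`Hi` plane and `A` the union of the edge sets of some of the `Hi`. -/
def DefinesPlaneJoinBisep (G : RibbonGraph) (A : Set (Set G.F)) : Prop :=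
  ∃ (l : ℕ) (H : Fin l → Set (Set G.F)) (I : Set (Fin l)),
    G.IsSeqOfJoins l H ∧ (∀ i, G.PlanePart (H i)) ∧ A = ⋃ i ∈ I, H i

/-- The dual of a join-summand move: `G = H1 ∨ H2` is replaced by
`G^{E(H2)} = H1 ∨ H2*`. -/
def DJSMove (G G' : RibbonGraph) : Prop :=
  ∃ (B C : Set (Set G.F)) (v : Set G.F),
    B ∪ C = G.edgeSet ∧ G.IsJoinAt B C v ∧ Equiv G' (G.pdual C)

/-- `G ∼ H`: `H` is obtained from `G` by a finite sequence of dual of a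
join-summand moves, or `H = G`, or `H = G*`. -/
def Sim (G H : RibbonGraph) : Prop :=
  Relation.ReflTransGen DJSMove G H ∨ Equiv G H ∨ Equiv H G.gdual

/-- Toggling a join-summand: for an expression `G = K1 ∨ ⋯ ∨ Kr` as a sequence
of joins, replace the edge set `C` by the symmetric difference `C Δ E(Ki)`. -/
def ToggleJoinSummand (G : RibbonGraph) (C C' : Set (Set G.F)) : Prop :=
  ∃ (l : ℕ) (H : Fin l → Set (Set G.F)) (i : Fin l),
    G.IsSeqOfJoins l H ∧ C' = symmDiff C (H i)

/-- The disjoint union of two ribbon graphs. -/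
def disjUnion (P Q : RibbonGraph) : RibbonGraph where
  F := P.F ⊕ Q.F
  fintype := by haveI := P.fintype; haveI := Q.fintype; infer_instance
  t0 := fun x => match x with
    | .inl a => .inl (P.t0 a)
    | .inr b => .inr (Q.t0 b)
  t1 := fun x => match x with
    | .inl a => .inl (P.t1 a)
    | .inr b => .inr (Q.t1 b)
  t2 := fun x => match x with
    | .inl a => .inl (P.t2 a)
    | .inr b => .inr (Q.t2 b)
  t0_invol := by
    rintro (a | b)
    · exact congrArg Sum.inl (P.t0_invol a)
    · exact congrArg Sum.inr (Q.t0_invol b)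
  t1_invol := by
    rintro (a | b)
    · exact congrArg Sum.inl (P.t1_invol a)
    · exact congrArg Sum.inr (Q.t1_invol b)
  t2_invol := by
    rintro (a | b)
    · exact congrArg Sum.inl (P.t2_invol a)
    · exact congrArg Sum.inr (Q.t2_invol b)
  t0_ne := by
    rintro (a | b) h
    · exact P.t0_ne a (Sum.inl_injective h)
    · exact Q.t0_ne b (Sum.inr_injective h)
  t1_ne := by
    rintro (a | b) h
    · exact P.t1_ne a (Sum.inl_injective h)
    · exact Q.t1_ne b (Sum.inr_injective h)
  t2_ne := by
    rintro (a | b) h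
    · exact P.t2_ne a (Sum.inl_injective h)
    · exact Q.t2_ne b (Sum.inr_injective h)
  comm := by
    rintro (a | b)
    · exact congrArg Sum.inl (P.comm a)
    · exact congrArg Sum.inr (Q.comm b)
  t02_ne := by
    rintro (a | b) h
    · exact P.t02_ne a (Sum.inl_injective h)
    · exact Q.t02_ne b (Sum.inr_injective h)
  orientable := by
    obtain ⟨sP, hP0, hP1, hP2⟩ := P.orientable
    obtain ⟨sQ, hQ0, hQ1, hQ2⟩ := Q.orientable
    refine ⟨Sum.elim sP sQ, ?_, ?_, ?_⟩
    · rintro (a | b)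
      · exact hP0 a
      · exact hQ0 b
    · rintro (a | b)
      · exact hP1 a
      · exact hQ1 b
    · rintro (a | b)
      · exact hP2 a
      · exact hQ2 b

/-- The underlying simple graph of a ribbon graph: vertices are the vertices of
`G`, and two distinct vertices are adjacent if some edge is incident to both. -/
def usg (G : RibbonGraph) : SimpleGraph ↥G.vertices where
  Adj a b := a ≠ b ∧ ∃ e ∈ G.edgeSet, G.Incid e ↑a ∧ G.Incid e ↑b
  symm := by
    constructor
    rintro a b ⟨hne, e, he, h1, h2⟩
    exact ⟨hne.symm, e, he, h2, h1⟩
  loopless := by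
    constructor
    rintro a ⟨hne, -⟩
    exact hne rfl

/-- Isomorphism of the underlying (multi)graphs of two ribbon graphs: a pair of
bijections on vertices and on edges preserving incidence. -/
def UnderlyingIso (G H : RibbonGraph) : Prop :=
  ∃ (fv : ↥G.vertices ≃ ↥H.vertices) (fe : ↥G.edgeSet ≃ ↥H.edgeSet),
    ∀ (e : ↥G.edgeSet) (w : ↥G.vertices),
      G.Incid ↑e ↑w ↔ H.Incid ↑(fe e) ↑(fv w)

/-- `Γ₀` is a minor of `Γ`: there are pairwise disjoint nonempty connected
branch sets realizing the adjacencies of `Γ₀`. -/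
def MinorOf {W V : Type*} (Γ₀ : SimpleGraph W) (Γ : SimpleGraph V) : Prop :=
  ∃ f : W → Set V,
    (∀ w, (f w).Nonempty) ∧
    (∀ w, (Γ.induce (f w)).Connected) ∧
    (Pairwise fun w w' => Disjoint (f w) (f w')) ∧
    ∀ w w', Γ₀.Adj w w' → ∃ a ∈ f w, ∃ b ∈ f w', Γ.Adj a b

/-- `G` is `k`-connected: its underlying graph is connected, has at least
`k + 1` vertices, and remains connected after deleting any set of fewer than
`k` vertices. -/
def KConnected (G : RibbonGraph) (k : ℕ) : Prop :=
  G.Connected ∧ k + 1 ≤ Nat.card ↥G.vertices ∧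
  ∀ S : Set (Set G.F), S ⊆ G.vertices → Nat.card ↥S < k →
    ∀ a ∈ G.vertices, a ∉ S → ∀ b ∈ G.vertices, b ∉ S →
      Relation.EqvGen (fun u w => u ∈ G.vertices ∧ w ∈ G.vertices ∧ u ∉ S ∧ w ∉ S ∧
        ∃ e ∈ G.edgeSet, G.Incid e u ∧ G.Incid e w) a b

end RibbonGraph

open Function Relation

section InvolutionPair

variable {α β : Type*}

def stepRel (a b : α → α) (x y : α) : Prop := y = a x ∨ y = b x

lemma stepRel_comm (a b : α → α) : stepRel a b = stepRel b a := by
  funext x y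
  exact propext or_comm

variable {a b : α → α}

lemma stepRel_symm (ha : Involutive a) (hb : Involutive b) : Std.Symm (stepRel a b) where
  symm := by
    rintro x y (rfl | rfl)
    · exact Or.inl (ha x).symm
    · exact Or.inr (hb x).symm

lemma eqvGen_stepRel_left (x : α) : EqvGen (stepRel a b) x (a x) := EqvGen.rel _ _ (Or.inl rfl)

lemma eqvGen_stepRel_right (x : α) : EqvGen (stepRel a b) x (b x) := EqvGen.rel _ _ (Or.inr rfl)

lemma eqvGen_stepRel_iterate (x : α) (k : ℕ) : EqvGen (stepRel a b) x ((b ∘ a)^[k] x) := by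
  induction k with
  | zero => exact EqvGen.refl x
  | succ k ih =>
    rw [iterate_succ_apply']
    exact ih.trans _ _ _ ((eqvGen_stepRel_left _).trans _ _ _ (eqvGen_stepRel_right _))

/-- With `σ = b ∘ a`, the orbit of `x` is the union of the `σ`-cycles of `x` and of `a x`;
finiteness turns the `σ⁻¹`-steps into `σ`-steps. -/
lemma exists_iterate_of_eqvGen_stepRel [Finite α] (ha : Involutive a) (hb : Involutive b)
    {x y : α} (h : EqvGen (stepRel a b) x y) :
    ∃ m : ℕ, y = (b ∘ a)^[m] x ∨ y = a ((b ∘ a)^[m] x) := by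
  let σ : Equiv.Perm α := (ha.toPerm a).trans (hb.toPerm b)
  have hσ : σ.SameCycle x y ∨ σ.SameCycle x (a y) := by
    have := stepRel_symm ha hb
    rw [EqvGen.eqvGen_eq_reflTransGen] at h
    induction h with
    | refl => exact Or.inl (Equiv.Perm.SameCycle.refl _ _)
    | tail _ hst ih =>
      rcases hst with rfl | rfl
      · rw [ha]
        exact ih.symm
      · rcases ih with h | h
        · exact Or.inr ((Equiv.Perm.sameCycle_symm_apply_right (f := σ)).2 h)
        · have := (Equiv.Perm.sameCycle_apply_right (f := σ)).2 h
          exact Or.inl (by simpa [σ, ha _] using this)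
  rcases hσ with h | h
  · obtain ⟨m, hm⟩ := h.exists_nat_pow_eq
    exact ⟨m, Or.inl (by rw [← hm, Equiv.Perm.coe_pow]; rfl)⟩
  · obtain ⟨m, hm⟩ := h.exists_nat_pow_eq
    exact ⟨m, Or.inr (by rw [← ha y, ← hm, Equiv.Perm.coe_pow]; rfl)⟩

lemma iterate_eq_of_forall_lt {f g : α → α} {x : α} {k : ℕ}
    (h : ∀ j < k, f (g^[j] x) = g (g^[j] x)) : ∀ j ≤ k, f^[j] x = g^[j] x := by
  intro j hj
  induction j with
  | zero => rfl
  | succ j ih => rw [iterate_succ_apply', iterate_succ_apply', ih (by omega), h j (by omega)]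

variable {a' b' : β → β} {φ : β → α}

lemma eqvGen_stepRel_map (hb' : ∀ z, φ (b' z) = b (φ z))
    (ha' : ∀ z, ∃ k, φ (a' z) = a ((b ∘ a)^[k] (φ z))) {z z' : β}
    (h : EqvGen (stepRel a' b') z z') : EqvGen (stepRel a b) (φ z) (φ z') := by
  induction h with
  | rel z w hzw =>
    rcases hzw with rfl | rfl
    · obtain ⟨k, hk⟩ := ha' z
      rw [hk]
      exact (eqvGen_stepRel_iterate _ k).trans _ _ _ (eqvGen_stepRel_left _)
    · rw [hb']
      exact eqvGen_stepRel_right _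
  | refl => exact EqvGen.refl _
  | symm _ _ _ ih => exact ih.symm
  | trans _ _ _ _ _ ih ih' => exact ih.trans _ _ _ ih'

lemma eqvGen_stepRel_of_apply_iterate_eq (hφ : Injective φ) (hb' : ∀ z, φ (b' z) = b (φ z))
    (ha' : ∀ z, ∃ k, φ (a' z) = a ((b ∘ a)^[k] (φ z)) ∧
      ∀ j < k, a ((b ∘ a)^[j] (φ z)) ∉ Set.range φ) (m : ℕ) {z z' : β}
    (hm : a ((b ∘ a)^[m] (φ z)) = φ z') : EqvGen (stepRel a' b') z z' := by
  induction m using Nat.strong_induction_on generalizing z with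
  | _ m ih =>
  obtain ⟨k, hk, hkmin⟩ := ha' z
  have hkm : k ≤ m := by
    by_contra! hlt
    exact hkmin m hlt ⟨z', hm.symm⟩
  rcases hkm.eq_or_lt with rfl | hlt
  · rw [← hφ (hk.trans hm)]
    exact eqvGen_stepRel_left _
  -- the walk reaches `a' z` first, crosses to its `b'`-partner and continues from there
  have hy : φ (b' (a' z)) = (b ∘ a)^[k + 1] (φ z) := by
    rw [hb', hk, iterate_succ_apply']
    rfl
  have hrest : a ((b ∘ a)^[m - (k + 1)] (φ (b' (a' z)))) = φ z' := by
    rw [hy, ← iterate_add_apply, Nat.sub_add_cancel hlt, hm]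
  exact ((eqvGen_stepRel_left _).trans _ _ _ (eqvGen_stepRel_right _)).trans
    _ _ _ (ih _ (by omega) hrest)

theorem eqvGen_stepRel_iff_of_firstReturn [Finite α] (ha : Involutive a) (hb : Involutive b)
    (hφ : Injective φ) (hb' : ∀ z, φ (b' z) = b (φ z))
    (ha' : ∀ z, ∃ k, φ (a' z) = a ((b ∘ a)^[k] (φ z)) ∧
      ∀ j < k, a ((b ∘ a)^[j] (φ z)) ∉ Set.range φ) {z z' : β} :
    EqvGen (stepRel a' b') z z' ↔ EqvGen (stepRel a b) (φ z) (φ z') := by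
  refine ⟨eqvGen_stepRel_map hb' fun z => (ha' z).imp fun _ => And.left, fun h => ?_⟩
  obtain ⟨m, hm | hm⟩ := exists_iterate_of_eqvGen_stepRel ha hb h
  · cases m with
    | zero =>
      rw [hφ hm]
      exact EqvGen.refl _
    | succ n =>
      have hn : a ((b ∘ a)^[n] (φ z)) = φ (b' z') := by
        rw [hb', hm, iterate_succ_apply', comp_apply, hb]
      exact (eqvGen_stepRel_of_apply_iterate_eq hφ hb' ha' n hn).trans _ _ _
        (eqvGen_stepRel_right _).symm
  · exact eqvGen_stepRel_of_apply_iterate_eq hφ hb' ha' m hm.symm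

end InvolutionPair

section QuotCount

variable {α β : Type*}

theorem Quot.card_eq_ncard_image_of_eqvGen_iff {r : α → α → Prop} {r' : β → β → Prop}
    {φ : β → α} (h : ∀ z z', EqvGen r' z z' ↔ EqvGen r (φ z) (φ z')) :
    Nat.card (Quot r') = (Quot.mk r '' Set.range φ).ncard := by
  let f : Quot r' → Quot r := Quot.lift (fun z => Quot.mk r (φ z)) fun z z' hzz =>
    Quot.eqvGen_sound ((h z z').1 (EqvGen.rel _ _ hzz))
  have hf : Injective f := by
    rintro ⟨z⟩ ⟨z'⟩ hzz
    exact Quot.eqvGen_sound ((h z z').2 (Quot.eqvGen_exact hzz))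
  rw [← Set.ncard_range_of_injective hf, Set.range_quot_lift, ← Set.range_comp]
  rfl

theorem Quot.card_add_ncard_inter [Finite α] (r : α → α → Prop) {S T : Set α}
    (hST : S ∪ T = Set.univ) :
    Nat.card (Quot r) + (Quot.mk r '' S ∩ Quot.mk r '' T).ncard =
      (Quot.mk r '' S).ncard + (Quot.mk r '' T).ncard := by
  rw [← Set.ncard_union_add_ncard_inter, ← Set.image_union, hST,
    Set.image_univ_of_surjective Quot.mk_surjective, Set.ncard_univ]

theorem Quot.ncard_image_congr {r r' : α → α → Prop} {T : Set α}
    (h : ∀ x ∈ T, ∀ y ∈ T, EqvGen r x y ↔ EqvGen r' x y) :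
    (Quot.mk r '' T).ncard = (Quot.mk r' '' T).ncard := by
  refine Set.ncard_congr (fun q hq => Quot.mk r' hq.choose)
    (fun q hq => ⟨_, hq.choose_spec.1, rfl⟩) (fun q q' hq hq' hqq' => ?_) ?_
  · rw [← hq.choose_spec.2, ← hq'.choose_spec.2]
    exact Quot.eqvGen_sound
      ((h _ hq.choose_spec.1 _ hq'.choose_spec.1).2 (Quot.eqvGen_exact hqq'))
  · rintro _ ⟨x, hx, rfl⟩
    have hq : Quot.mk r x ∈ Quot.mk r '' T := ⟨x, hx, rfl⟩
    exact ⟨_, hq, Quot.eqvGen_sound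
      ((h _ hq.choose_spec.1 _ hx).1 (Quot.eqvGen_exact hq.choose_spec.2))⟩

theorem Quot.compl_image_mk (r : α → α → Prop) (S : Set α) :
    (Quot.mk r '' S)ᶜ = Quot.mk r '' {x | ∀ y, EqvGen r x y → y ∉ S} := by
  ext q
  induction q using Quot.ind with
  | _ x =>
    simp only [Set.mem_compl_iff, Set.mem_image, not_exists, not_and, Set.mem_ofPred_eq]
    constructor
    · intro hx
      exact ⟨x, fun y hxy hy => hx y hy (Quot.eqvGen_sound hxy).symm, rfl⟩
    · rintro ⟨x', hx', hxx'⟩ y hy hyx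
      exact hx' y (Quot.eqvGen_exact (hxx'.trans hyx.symm)) hy

theorem Relation.eqvGen_iff_of_forall_notMem {r r' : α → α → Prop} (hr : Std.Symm r)
    (hr' : Std.Symm r') {S : Set α} (hrr' : ∀ u ∉ S, ∀ w, r u w ↔ r' u w) {x : α}
    (hx : ∀ y, EqvGen r x y → y ∉ S) {y : α} : EqvGen r x y ↔ EqvGen r' x y := by
  simp only [EqvGen.eqvGen_eq_reflTransGen] at hx ⊢
  constructor
  · intro h
    induction h with
    | refl => rfl
    | tail hxu huw ih => exact ih.tail ((hrr' _ (hx _ hxu) _).1 huw)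
  · intro h
    induction h with
    | refl => rfl
    | tail _ huw ih => exact ih.tail ((hrr' _ (hx _ ih) _).2 huw)

theorem Quot.ncard_compl_image_congr {r r' : α → α → Prop} (hr : Std.Symm r)
    (hr' : Std.Symm r') {S : Set α} (hrr' : ∀ u ∉ S, ∀ w, r u w ↔ r' u w) :
    (Quot.mk r '' S)ᶜ.ncard = (Quot.mk r' '' S)ᶜ.ncard := by
  have hT : {x | ∀ y, EqvGen r' x y → y ∉ S} = {x | ∀ y, EqvGen r x y → y ∉ S} := by
    ext x
    exact ⟨fun hx y hy => hx y ((eqvGen_iff_of_forall_notMem hr' hr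
        (fun u hu w => (hrr' u hu w).symm) hx).2 hy),
      fun hx y hy => hx y ((eqvGen_iff_of_forall_notMem hr hr' hrr' hx).2 hy)⟩
  rw [Quot.compl_image_mk, Quot.compl_image_mk, hT]
  exact Quot.ncard_image_congr fun x hx _ _ => eqvGen_iff_of_forall_notMem hr hr' hrr' hx

end QuotCount

namespace RibbonGraph

instance (G : RibbonGraph) : Fintype G.F := G.fintype

def compStep (G : RibbonGraph) (x y : G.F) : Prop := y = G.t0 x ∨ y = G.t1 x ∨ y = G.t2 x

variable {G H : RibbonGraph}

lemma numVertices_eq_card : G.numVertices = Nat.card (Quot (stepRel G.t1 G.t2)) := rfl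

lemma numEdges_eq_card : G.numEdges = Nat.card (Quot (stepRel G.t0 G.t2)) := rfl

lemma numFaces_eq_card : G.numFaces = Nat.card (Quot (stepRel G.t0 G.t1)) := rfl

lemma numComponents_eq_card : G.numComponents = Nat.card (Quot G.compStep) := rfl

lemma compRel_of_vertexRel {x y : G.F} (h : G.vertexRel x y) : G.compRel x y :=
  EqvGen.mono (fun _ _ hxy => hxy.elim (Or.inr ∘ Or.inl) (Or.inr ∘ Or.inr)) _ _ h

lemma eq_vertexOf_of_mem {w : Set G.F} (hw : w ∈ G.vertices) {x : G.F} (hx : x ∈ w) :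
    w = G.vertexOf x := by
  obtain ⟨x₀, rfl⟩ := hw
  ext y
  exact ⟨fun hy => EqvGen.trans _ _ _ (EqvGen.symm _ _ hx) hy,
    fun hy => EqvGen.trans _ _ _ hx hy⟩

lemma edgeOf_eq_of_eqvGen {x y : G.F} (h : EqvGen (stepRel G.t0 G.t2) x y) :
    G.edgeOf x = G.edgeOf y := by
  induction h with
  | rel x y hxy =>
    rcases hxy with rfl | rfl
    exacts [(G.edgeOf_t0 x).symm, (G.edgeOf_t2 x).symm]
  | refl => rfl
  | symm _ _ _ ih => exact ih.symm
  | trans _ _ _ _ _ ih ih' => exact ih.trans ih'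

section PartialDual

variable {A B : Set (Set G.F)} {x : G.F}

lemma pdual_t1 (A : Set (Set G.F)) : (G.pdual A).t1 = G.t1 := rfl

lemma pdual_t0_of_mem (h : G.edgeOf x ∈ A) : (G.pdual A).t0 x = G.t2 x := if_pos h

lemma pdual_t0_of_notMem (h : G.edgeOf x ∉ A) : (G.pdual A).t0 x = G.t0 x := if_neg h

lemma pdual_t2_of_mem (h : G.edgeOf x ∈ A) : (G.pdual A).t2 x = G.t0 x := if_pos h

lemma pdual_t2_of_notMem (h : G.edgeOf x ∉ A) : (G.pdual A).t2 x = G.t2 x := if_neg h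

lemma stepRel_pdual_of_notMem (h : G.edgeOf x ∉ A) (y : G.F) :
    stepRel (G.pdual A).t1 (G.pdual A).t2 x y ↔ stepRel G.t1 G.t2 x y := by
  unfold stepRel
  rw [pdual_t2_of_notMem h, pdual_t1]
  exact Iff.rfl

lemma pdual_iterate_eq {k : ℕ} (hk : ∀ j < k, G.edgeOf (G.t1 ((G.t2 ∘ G.t1)^[j] x)) ∉ A) :
    ∀ j ≤ k, ((G.pdual A).t2 ∘ (G.pdual A).t1)^[j] x = (G.t2 ∘ G.t1)^[j] x :=
  iterate_eq_of_forall_lt fun j hj => pdual_t2_of_notMem (hk j hj)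

theorem numEdges_pdual (A : Set (Set G.F)) : (G.pdual A).numEdges = G.numEdges := by
  refine Nat.card_congr (Quot.congrRight fun (x y : G.F) => ?_)
  by_cases h : G.edgeOf x ∈ A
  · rw [pdual_t0_of_mem h, pdual_t2_of_mem h]
    exact or_comm
  · rw [pdual_t0_of_notMem h, pdual_t2_of_notMem h]
    exact Iff.rfl

theorem numComponents_pdual (A : Set (Set G.F)) :
    (G.pdual A).numComponents = G.numComponents := by
  refine Nat.card_congr (Quot.congrRight fun (x y : G.F) => ?_)
  by_cases h : G.edgeOf x ∈ A
  · rw [pdual_t0_of_mem h, pdual_t2_of_mem h, pdual_t1]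
    show y = _ ∨ y = _ ∨ y = _ ↔ y = _ ∨ y = _ ∨ y = _
    tauto
  · rw [pdual_t0_of_notMem h, pdual_t2_of_notMem h, pdual_t1]
    exact Iff.rfl

/-- `(G^A)^* = G^B`, and the faces of a ribbon graph are the vertices of its dual. -/
theorem numFaces_pdual_eq_numVertices_pdual (hAB : ∀ x, G.edgeOf x ∈ A ↔ G.edgeOf x ∉ B) :
    (G.pdual A).numFaces = (G.pdual B).numVertices := by
  refine Nat.card_congr (Quot.congrRight fun (x y : G.F) => ?_)
  by_cases h : G.edgeOf x ∈ A
  · rw [pdual_t0_of_mem h, pdual_t2_of_notMem ((hAB x).1 h), pdual_t1, pdual_t1]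
    exact or_comm
  · rw [pdual_t0_of_notMem h, pdual_t2_of_mem (not_not.1 (mt (hAB x).2 h)), pdual_t1,
      pdual_t1]
    exact or_comm

lemma vertexOf_pdual_of_forall_notMem (h : ∀ y ∈ G.vertexOf x, G.edgeOf y ∉ A) :
    (G.pdual A).vertexOf x = G.vertexOf x := by
  ext y
  exact (eqvGen_iff_of_forall_notMem (stepRel_symm G.t1_invol G.t2_invol)
    (stepRel_symm (G.pdual A).t1_invol (G.pdual A).t2_invol) (S := {y | G.edgeOf y ∈ A})
    (fun u hu w => (stepRel_pdual_of_notMem hu w).symm) h).symm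

end PartialDual

namespace IsInducedVia

variable {A : Set (Set G.F)} {φ : H.F → G.F}

lemma injective (hφ : IsInducedVia G H A φ) : Injective φ := hφ.2.1

lemma mem_range_iff (hφ : IsInducedVia G H A φ) {x : G.F} :
    x ∈ Set.range φ ↔ G.edgeOf x ∈ A := by
  rw [hφ.2.2.1]
  rfl

lemma edgeOf_mem (hφ : IsInducedVia G H A φ) (z : H.F) : G.edgeOf (φ z) ∈ A :=
  hφ.mem_range_iff.1 ⟨z, rfl⟩

lemma t0_comm (hφ : IsInducedVia G H A φ) (z : H.F) : φ (H.t0 z) = G.t0 (φ z) :=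
  hφ.2.2.2.1 z

lemma t2_comm (hφ : IsInducedVia G H A φ) (z : H.F) : φ (H.t2 z) = G.t2 (φ z) :=
  hφ.2.2.2.2.1 z

lemma t1_firstReturn (hφ : IsInducedVia G H A φ) (z : H.F) :
    ∃ k, φ (H.t1 z) = G.t1 ((G.t2 ∘ G.t1)^[k] (φ z)) ∧
      ∀ j < k, G.t1 ((G.t2 ∘ G.t1)^[j] (φ z)) ∉ Set.range φ :=
  (hφ.2.2.2.2.2 z).imp fun _ hk => ⟨hk.1, fun j hj => mt hφ.mem_range_iff.1 (hk.2 j hj)⟩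

lemma range_union_range {Q : RibbonGraph} {B : Set (Set G.F)} {ψ : Q.F → G.F}
    (hφ : IsInducedVia G H A φ) (hψ : IsInducedVia G Q B ψ) (hcover : A ∪ B = G.edgeSet) :
    Set.range φ ∪ Set.range ψ = Set.univ := by
  refine Set.eq_univ_of_forall fun x => ?_
  have hx : G.edgeOf x ∈ A ∪ B := hcover ▸ ⟨x, rfl⟩
  exact hx.imp hφ.mem_range_iff.2 hψ.mem_range_iff.2

theorem vertexRel_iff (hφ : IsInducedVia G H A φ) {z z' : H.F} :
    H.vertexRel z z' ↔ G.vertexRel (φ z) (φ z') :=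
  eqvGen_stepRel_iff_of_firstReturn G.t1_invol G.t2_invol hφ.injective hφ.t2_comm
    hφ.t1_firstReturn

theorem edgeRel_iff (hφ : IsInducedVia G H A φ) {z z' : H.F} :
    EqvGen (stepRel H.t0 H.t2) z z' ↔ EqvGen (stepRel G.t0 G.t2) (φ z) (φ z') :=
  eqvGen_stepRel_iff_of_firstReturn G.t0_invol G.t2_invol hφ.injective hφ.t2_comm
    fun z => ⟨0, hφ.t0_comm z, by simp⟩

/-- In `G^A` the flags of `A` are paired by `t0`, and the corner walk of `G^A` skips the edges
outside `A` exactly as `H.t1` does. -/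
theorem faceRel_iff_pdual (hφ : IsInducedVia G H A φ) {z z' : H.F} :
    EqvGen (stepRel H.t1 H.t0) z z' ↔
      EqvGen (stepRel (G.pdual A).t1 (G.pdual A).t2) (φ z) (φ z') := by
  refine eqvGen_stepRel_iff_of_firstReturn (G.pdual A).t1_invol (G.pdual A).t2_invol
    hφ.injective (fun z => by rw [hφ.t0_comm, pdual_t2_of_mem (hφ.edgeOf_mem z)]) fun z => ?_
  obtain ⟨k, hk, hkφ⟩ := hφ.t1_firstReturn z
  have hiter := pdual_iterate_eq fun j hj => mt hφ.mem_range_iff.2 (hkφ j hj)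
  refine ⟨k, by rw [hiter k le_rfl]; exact hk, fun j hj => ?_⟩
  rw [hiter j hj.le]
  exact hkφ j hj

lemma compRel_map (hφ : IsInducedVia G H A φ) {z z' : H.F} (h : H.compRel z z') :
    G.compRel (φ z) (φ z') := by
  induction h with
  | rel z w hzw =>
    rcases hzw with rfl | rfl | rfl
    · rw [hφ.t0_comm]
      exact EqvGen.rel _ _ (Or.inl rfl)
    · exact compRel_of_vertexRel (hφ.vertexRel_iff.1 (EqvGen.rel _ _ (Or.inl rfl)))
    · rw [hφ.t2_comm]
      exact EqvGen.rel _ _ (Or.inr (Or.inr rfl))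
  | refl => exact EqvGen.refl _
  | symm _ _ _ ih => exact EqvGen.symm _ _ ih
  | trans _ _ _ _ _ ih ih' => exact EqvGen.trans _ _ _ ih ih'

theorem numVertices_eq_ncard (hφ : IsInducedVia G H A φ) :
    H.numVertices = (Quot.mk (stepRel G.t1 G.t2) '' Set.range φ).ncard :=
  Quot.card_eq_ncard_image_of_eqvGen_iff fun _ _ => hφ.vertexRel_iff

theorem numEdges_eq_ncard (hφ : IsInducedVia G H A φ) :
    H.numEdges = (Quot.mk (stepRel G.t0 G.t2) '' Set.range φ).ncard :=
  Quot.card_eq_ncard_image_of_eqvGen_iff fun _ _ => hφ.edgeRel_iff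

theorem numFaces_eq_ncard_pdual (hφ : IsInducedVia G H A φ) :
    H.numFaces = (Quot.mk (stepRel (G.pdual A).t1 (G.pdual A).t2) '' Set.range φ).ncard := by
  rw [numFaces_eq_card, stepRel_comm]
  exact Quot.card_eq_ncard_image_of_eqvGen_iff fun _ _ => hφ.faceRel_iff_pdual

theorem numVertices_pdual_add_numVertices (hφ : IsInducedVia G H A φ) :
    (G.pdual A).numVertices + H.numVertices = H.numFaces + G.numVertices := by
  have hG : G.numVertices = (Quot.mk (stepRel G.t1 G.t2) '' Set.range φ).ncard +
      (Quot.mk (stepRel G.t1 G.t2) '' Set.range φ)ᶜ.ncard :=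
    (Set.ncard_add_ncard_compl _).symm
  have hGA : (G.pdual A).numVertices =
      (Quot.mk (stepRel (G.pdual A).t1 (G.pdual A).t2) '' Set.range φ).ncard +
        (Quot.mk (stepRel (G.pdual A).t1 (G.pdual A).t2) '' Set.range φ)ᶜ.ncard :=
    (Set.ncard_add_ncard_compl _).symm
  have hcompl : (Quot.mk (stepRel G.t1 G.t2) '' Set.range φ)ᶜ.ncard =
      (Quot.mk (stepRel (G.pdual A).t1 (G.pdual A).t2) '' Set.range φ)ᶜ.ncard :=
    Quot.ncard_compl_image_congr (stepRel_symm G.t1_invol G.t2_invol)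
      (stepRel_symm (G.pdual A).t1_invol (G.pdual A).t2_invol)
      fun u hu w => (stepRel_pdual_of_notMem (mt hφ.mem_range_iff.2 hu) w).symm
  rw [hφ.numVertices_eq_ncard, hφ.numFaces_eq_ncard_pdual]
  omega

end IsInducedVia

variable {P Q : RibbonGraph} {Bp Bq : Set (Set G.F)} {v : Set G.F}
  {φP : P.F → G.F} {φQ : Q.F → G.F}

theorem numEdges_eq_add (hP : IsInducedVia G P Bp φP) (hQ : IsInducedVia G Q Bq φQ)
    (hdisj : Disjoint Bp Bq) (hcover : Bp ∪ Bq = G.edgeSet) :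
    G.numEdges = P.numEdges + Q.numEdges := by
  have hcount :=
    Quot.card_add_ncard_inter (stepRel G.t0 G.t2) (hP.range_union_range hQ hcover)
  have hinter : Quot.mk (stepRel G.t0 G.t2) '' Set.range φP ∩
      Quot.mk (stepRel G.t0 G.t2) '' Set.range φQ = ∅ := by
    refine Set.eq_empty_of_forall_notMem ?_
    rintro _ ⟨⟨_, ⟨z, rfl⟩, rfl⟩, ⟨_, ⟨z', rfl⟩, hzz'⟩⟩
    have hedge := edgeOf_eq_of_eqvGen (Quot.eqvGen_exact hzz')
    exact Set.disjoint_left.mp hdisj (hP.edgeOf_mem z) (hedge ▸ hQ.edgeOf_mem z')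
  rw [hinter, Set.ncard_empty, add_zero] at hcount
  rw [numEdges_eq_card, hcount, hP.numEdges_eq_ncard, hQ.numEdges_eq_ncard]

open Classical in
noncomputable def componentIn (φ : H.F → G.F) (p : Quot H.compStep) (x : G.F) :
    Quot H.compStep :=
  if h : x ∈ Set.range φ then Quot.mk _ h.choose else p

lemma componentIn_apply {φ : H.F → G.F} (hφ : Injective φ) (p : Quot H.compStep) (z : H.F) :
    componentIn φ p (φ z) = Quot.mk _ z := by
  have h : φ z ∈ Set.range φ := ⟨z, rfl⟩
  rw [componentIn, dif_pos h, hφ h.choose_spec]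

lemma componentIn_of_notMem {φ : H.F → G.F} {p : Quot H.compStep} {x : G.F}
    (h : x ∉ Set.range φ) : componentIn φ p x = p :=
  dif_neg h

namespace IsOneSumAt

lemma symm (hsum : G.IsOneSumAt Bp Bq v) : G.IsOneSumAt Bq Bp v := by
  obtain ⟨hBp, hBq, hBpne, hBqne, hdisj, hv, hinter⟩ := hsum
  exact ⟨hBq, hBp, hBqne, hBpne, hdisj.symm, hv, Set.inter_comm _ _ ▸ hinter⟩

lemma disjoint (hsum : G.IsOneSumAt Bp Bq v) : Disjoint Bp Bq := hsum.2.2.2.2.1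

lemma mem_vertices (hsum : G.IsOneSumAt Bp Bq v) : v ∈ G.vertices := hsum.2.2.2.2.2.1

lemma verticesIn_inter (hsum : G.IsOneSumAt Bp Bq v) :
    G.verticesIn Bp ∩ G.verticesIn Bq = {v} :=
  hsum.2.2.2.2.2.2

lemma exists_mem (hsum : G.IsOneSumAt Bp Bq v) : ∃ x ∈ v, G.edgeOf x ∈ Bp := by
  have hv : v ∈ G.verticesIn Bp ∩ G.verticesIn Bq := hsum.verticesIn_inter ▸ rfl
  exact hv.1.2

lemma vertexOf_eq (hsum : G.IsOneSumAt Bp Bq v) {x y : G.F} (hxy : G.vertexRel x y)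
    (hx : G.edgeOf x ∈ Bp) (hy : G.edgeOf y ∈ Bq) : G.vertexOf x = v := by
  have hx' : G.vertexOf x ∈ G.verticesIn Bp ∩ G.verticesIn Bq :=
    ⟨⟨⟨x, rfl⟩, x, EqvGen.refl x, hx⟩, ⟨⟨x, rfl⟩, y, hxy, hy⟩⟩
  rwa [hsum.verticesIn_inter] at hx'

theorem mem_vertices_pdual (hsum : G.IsOneSumAt Bp Bq v) {w : Set G.F}
    (hw : w ∈ G.verticesIn Bp) (hwv : w ≠ v) : w ∈ (G.pdual Bq).vertices := by
  obtain ⟨hwV, x, hxw, hx⟩ := hw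
  rw [eq_vertexOf_of_mem hwV hxw] at hwv ⊢
  exact ⟨x, (vertexOf_pdual_of_forall_notMem fun y hy hyBq =>
    hwv (hsum.vertexOf_eq hy hx hyBq)).symm⟩

theorem numVertices_add_one (hsum : G.IsOneSumAt Bp Bq v) (hP : IsInducedVia G P Bp φP)
    (hQ : IsInducedVia G Q Bq φQ) (hcover : Bp ∪ Bq = G.edgeSet) :
    G.numVertices + 1 = P.numVertices + Q.numVertices := by
  obtain ⟨_, hxv, hxP⟩ := hsum.exists_mem
  obtain ⟨zP, rfl⟩ := hP.mem_range_iff.2 hxP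
  obtain ⟨_, hyv, hyQ⟩ := hsum.symm.exists_mem
  obtain ⟨zQ, rfl⟩ := hQ.mem_range_iff.2 hyQ
  have hcount :=
    Quot.card_add_ncard_inter (stepRel G.t1 G.t2) (hP.range_union_range hQ hcover)
  have hinter : Quot.mk (stepRel G.t1 G.t2) '' Set.range φP ∩
      Quot.mk (stepRel G.t1 G.t2) '' Set.range φQ = {Quot.mk _ (φP zP)} := by
    refine Set.eq_singleton_iff_unique_mem.2 ⟨⟨⟨_, ⟨zP, rfl⟩, rfl⟩, ⟨_, ⟨zQ, rfl⟩, ?_⟩⟩, ?_⟩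
    · rw [eq_vertexOf_of_mem hsum.mem_vertices hxv] at hyv
      exact (Quot.eqvGen_sound hyv).symm
    · rintro _ ⟨⟨_, ⟨z, rfl⟩, rfl⟩, ⟨_, ⟨z', rfl⟩, hzz'⟩⟩
      have hv := hsum.vertexOf_eq (Quot.eqvGen_exact hzz'.symm) (hP.edgeOf_mem z)
        (hQ.edgeOf_mem z')
      exact Quot.eqvGen_sound (show φP zP ∈ G.vertexOf (φP z) from hv ▸ hxv)
  rw [hinter, Set.ncard_singleton] at hcount
  rw [numVertices_eq_card, hcount, hP.numVertices_eq_ncard, hQ.numVertices_eq_ncard]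

/-- The corners between `P` and the rest of `G` all lie at `v`, where `componentIn` agrees with
its value on the flags outside `P`. -/
theorem componentIn_eq_of_vertexRel (hsum : G.IsOneSumAt Bp Bq v) (hP : IsInducedVia G P Bp φP)
    (hcover : Bp ∪ Bq = G.edgeSet) {zv : P.F} (hzv : φP zv ∈ v) {x y : G.F}
    (hxy : G.vertexRel x y) :
    componentIn φP (Quot.mk _ zv) x = componentIn φP (Quot.mk _ zv) y := by
  have key : ∀ x y, G.vertexRel x y → x ∈ Set.range φP →
      componentIn φP (Quot.mk _ zv) x = componentIn φP (Quot.mk _ zv) y := by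
    rintro _ y hxy ⟨z, rfl⟩
    rw [componentIn_apply hP.injective]
    by_cases hy : y ∈ Set.range φP
    · obtain ⟨z', rfl⟩ := hy
      rw [componentIn_apply hP.injective]
      exact Quot.eqvGen_sound (compRel_of_vertexRel (hP.vertexRel_iff.2 hxy))
    have hyBq : G.edgeOf y ∈ Bq := by
      have hy' : G.edgeOf y ∈ Bp ∪ Bq := hcover ▸ ⟨y, rfl⟩
      exact hy'.resolve_left (mt hP.mem_range_iff.2 hy)
    have hv := hsum.vertexOf_eq hxy (hP.edgeOf_mem z) hyBq
    rw [componentIn_of_notMem hy]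
    exact Quot.eqvGen_sound (compRel_of_vertexRel
      (hP.vertexRel_iff.2 (show φP zv ∈ G.vertexOf (φP z) from hv ▸ hzv)))
  by_cases hx : x ∈ Set.range φP
  · exact key x y hxy hx
  by_cases hy : y ∈ Set.range φP
  · exact (key y x (EqvGen.symm _ _ hxy) hy).symm
  rw [componentIn_of_notMem hx, componentIn_of_notMem hy]

theorem componentIn_eq (hsum : G.IsOneSumAt Bp Bq v) (hP : IsInducedVia G P Bp φP)
    (hcover : Bp ∪ Bq = G.edgeSet) {zv : P.F} (hzv : φP zv ∈ v) {x y : G.F}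
    (h : G.compRel x y) :
    componentIn φP (Quot.mk _ zv) x = componentIn φP (Quot.mk _ zv) y := by
  have hedge : ∀ x,
      componentIn φP (Quot.mk _ zv) x = componentIn φP (Quot.mk _ zv) (G.t0 x) := by
    intro x
    by_cases hx : x ∈ Set.range φP
    · obtain ⟨z, rfl⟩ := hx
      rw [← hP.t0_comm, componentIn_apply hP.injective, componentIn_apply hP.injective]
      exact Quot.sound (Or.inl rfl)
    · have hx' : G.t0 x ∉ Set.range φP := by
        rwa [hP.mem_range_iff, G.edgeOf_t0, ← hP.mem_range_iff]
      rw [componentIn_of_notMem hx, componentIn_of_notMem hx']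
  have hstep : ∀ x y, G.compStep x y →
      componentIn φP (Quot.mk _ zv) x = componentIn φP (Quot.mk _ zv) y := by
    rintro x _ (rfl | rfl | rfl)
    · exact hedge x
    · exact hsum.componentIn_eq_of_vertexRel hP hcover hzv (EqvGen.rel _ _ (Or.inl rfl))
    · exact hsum.componentIn_eq_of_vertexRel hP hcover hzv (EqvGen.rel _ _ (Or.inr rfl))
  exact congrArg (Quot.lift _ hstep) (Quot.eqvGen_sound h)

theorem compRel_iff (hsum : G.IsOneSumAt Bp Bq v) (hP : IsInducedVia G P Bp φP)
    (hcover : Bp ∪ Bq = G.edgeSet) {z z' : P.F} :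
    P.compRel z z' ↔ G.compRel (φP z) (φP z') := by
  refine ⟨hP.compRel_map, fun h => Quot.eqvGen_exact ?_⟩
  obtain ⟨_, hxv, hxP⟩ := hsum.exists_mem
  obtain ⟨zv, rfl⟩ := hP.mem_range_iff.2 hxP
  have := hsum.componentIn_eq hP hcover hxv h
  rwa [componentIn_apply hP.injective, componentIn_apply hP.injective] at this

theorem numComponents_add_one (hsum : G.IsOneSumAt Bp Bq v) (hP : IsInducedVia G P Bp φP)
    (hQ : IsInducedVia G Q Bq φQ) (hcover : Bp ∪ Bq = G.edgeSet) :
    G.numComponents + 1 = P.numComponents + Q.numComponents := by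
  obtain ⟨_, hxv, hxP⟩ := hsum.exists_mem
  obtain ⟨zP, rfl⟩ := hP.mem_range_iff.2 hxP
  obtain ⟨_, hyv, hyQ⟩ := hsum.symm.exists_mem
  obtain ⟨zQ, rfl⟩ := hQ.mem_range_iff.2 hyQ
  have hcount := Quot.card_add_ncard_inter G.compStep (hP.range_union_range hQ hcover)
  have hinter : Quot.mk G.compStep '' Set.range φP ∩ Quot.mk G.compStep '' Set.range φQ =
      {Quot.mk _ (φP zP)} := by
    refine Set.eq_singleton_iff_unique_mem.2 ⟨⟨⟨_, ⟨zP, rfl⟩, rfl⟩, ⟨_, ⟨zQ, rfl⟩, ?_⟩⟩, ?_⟩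
    · rw [eq_vertexOf_of_mem hsum.mem_vertices hxv] at hyv
      exact (Quot.eqvGen_sound (compRel_of_vertexRel hyv)).symm
    · rintro _ ⟨⟨_, ⟨z, rfl⟩, rfl⟩, ⟨_, ⟨z', rfl⟩, hzz'⟩⟩
      have hz' : φQ z' ∉ Set.range φP := fun h =>
        Set.disjoint_left.mp hsum.disjoint (hP.mem_range_iff.1 h) (hQ.edgeOf_mem z')
      have := hsum.componentIn_eq hP hcover hxv (Quot.eqvGen_exact hzz'.symm)
      rw [componentIn_apply hP.injective, componentIn_of_notMem hz'] at this
      exact Quot.eqvGen_sound (hP.compRel_map (Quot.eqvGen_exact this))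
  have hcP : P.numComponents = (Quot.mk G.compStep '' Set.range φP).ncard :=
    Quot.card_eq_ncard_image_of_eqvGen_iff fun _ _ => hsum.compRel_iff hP hcover
  have hcQ : Q.numComponents = (Quot.mk G.compStep '' Set.range φQ).ncard :=
    Quot.card_eq_ncard_image_of_eqvGen_iff fun _ _ =>
      hsum.symm.compRel_iff hQ (Set.union_comm Bp Bq ▸ hcover)
  rw [hinter, Set.ncard_singleton] at hcount
  rw [numComponents_eq_card, hcount, hcP, hcQ]

theorem eulerGenus_pdual (hsum : G.IsOneSumAt Bp Bq v) (hP : IsInducedVia G P Bp φP)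
    (hQ : IsInducedVia G Q Bq φQ) (hcover : Bp ∪ Bq = G.edgeSet) :
    (G.pdual Bq).eulerGenus = P.eulerGenus + Q.eulerGenus := by
  have hvQ := hQ.numVertices_pdual_add_numVertices
  have hvP := hP.numVertices_pdual_add_numVertices
  have hf : (G.pdual Bq).numFaces = (G.pdual Bp).numVertices :=
    numFaces_pdual_eq_numVertices_pdual fun x => by
      have hx : G.edgeOf x ∈ Bp ∪ Bq := hcover ▸ ⟨x, rfl⟩
      exact ⟨fun h => Set.disjoint_right.mp hsum.disjoint h, hx.resolve_left⟩
  have he := numEdges_eq_add hP hQ hsum.disjoint hcover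
  have hv := hsum.numVertices_add_one hP hQ hcover
  have hc := hsum.numComponents_add_one hP hQ hcover
  simp only [eulerGenus, numEdges_pdual, numComponents_pdual, hf]
  omega

end IsOneSumAt

end RibbonGraph

/-- If `G = P ⊕ Q` is a 1-sum at a vertex `v` with `Q` plane, then the genus of
the partial dual `G^{E(Q)}` equals the genus of `P`; moreover every vertex of
`P` other than `v` is also a vertex of `G^{E(Q)}`. -/
theorem genus_pdual_of_oneSum (G P Q : RibbonGraph) (Bp Bq : Set (Set G.F))
    (v : Set G.F)
    (hP : RibbonGraph.IsInducedSubgraph G P Bp)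
    (hQ : RibbonGraph.IsInducedSubgraph G Q Bq)
    (hsum : G.IsOneSumAt Bp Bq v)
    (hcover : Bp ∪ Bq = G.edgeSet)
    (hQplane : Q.IsPlane) :
    (G.pdual Bq).genus = P.genus ∧
    ∀ w ∈ G.verticesIn Bp, w ≠ v → w ∈ (G.pdual Bq).vertices := by
  obtain ⟨φP, hφP⟩ := hP
  obtain ⟨φQ, hφQ⟩ := hQ
  refine ⟨?_, fun w hw hwv => hsum.mem_vertices_pdual hw hwv⟩
  rw [RibbonGraph.genus, RibbonGraph.genus, hsum.eulerGenus_pdual hφP hφQ hcover,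
    show Q.eulerGenus = 0 from hQplane, add_zero]
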